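/- The vector A^{−1} e_{(0,0,0)} equals (1+e^{−1/q}) · Σ_{j=0}^{3q−1} (e^{−j/q}/(1−e^{−3})) · e_{(1, j, x_j)}, where e_{(b,j,x)} denotes the standard basis vectors of ℂ^{6qN}. -/

import Mathlib

open Matrix

noncomputable section

/-- The step function underlying the permutation matrix `P`: it sends the index `(j, x)`
to `((j+1) mod 3q, π_{j+1}(x))` for `0 ≤ j < q`, to `(j+1, x)` for `q ≤ j < 2q`, and to
`((j+1) mod 3q, π_{3q−j}⁻¹(x))` for `2q ≤ j < 3q` (here `π` is 0-indexed). -/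
def stepFn (q N : ℕ) (π : Fin q → Equiv.Perm (Fin N)) :
    Fin (3 * q) × Fin N → Fin (3 * q) × Fin N := fun p =>
  if h : (p.1 : ℕ) < q then
    (⟨((p.1 : ℕ) + 1) % (3 * q), Nat.mod_lt _ ((Nat.zero_le _).trans_lt p.1.isLt)⟩,
      π ⟨(p.1 : ℕ), h⟩ p.2)
  else if h2 : (p.1 : ℕ) < 2 * q then
    (⟨((p.1 : ℕ) + 1) % (3 * q), Nat.mod_lt _ ((Nat.zero_le _).trans_lt p.1.isLt)⟩, p.2)
  else
    (⟨((p.1 : ℕ) + 1) % (3 * q), Nat.mod_lt _ ((Nat.zero_le _).trans_lt p.1.isLt)⟩,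
      (π ⟨3 * q - 1 - (p.1 : ℕ), by have := p.1.isLt; omega⟩)⁻¹ p.2)

/-- The `3qN × 3qN` permutation matrix `P`, sending basis vector `e_{(j,x)}` to
`e_{stepFn (j,x)}`. -/
def permMat (q N : ℕ) (π : Fin q → Equiv.Perm (Fin N)) :
    Matrix (Fin (3 * q) × Fin N) (Fin (3 * q) × Fin N) ℂ :=
  Matrix.of fun r c => if r = stepFn q N π c then 1 else 0

/-- The inverse `P⁻¹` of the permutation matrix `P`, sending `e_{stepFn (j,x)}` to
`e_{(j,x)}`. -/
def permMatInv (q N : ℕ) (π : Fin q → Equiv.Perm (Fin N)) :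
    Matrix (Fin (3 * q) × Fin N) (Fin (3 * q) × Fin N) ℂ :=
  Matrix.of fun r c => if stepFn q N π r = c then 1 else 0

/-- The `6qN × 6qN` matrix
`A = (1+e^{−1/q})⁻¹ (|0⟩⟨1| ⊗ (I − e^{−1/q} P) + |1⟩⟨0| ⊗ (I − e^{−1/q} P⁻¹))`. -/
def qlspMat (q N : ℕ) (π : Fin q → Equiv.Perm (Fin N)) :
    Matrix (Fin 2 × Fin (3 * q) × Fin N) (Fin 2 × Fin (3 * q) × Fin N) ℂ :=
  Matrix.of fun r c =>
    ((((1 : ℝ) + Real.exp (-1 / q)) : ℝ) : ℂ)⁻¹ *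
      (if r.1 = 0 ∧ c.1 = 1 then
        ((1 : Matrix (Fin (3 * q) × Fin N) (Fin (3 * q) × Fin N) ℂ)
            - (Real.exp (-1 / q) : ℂ) • permMat q N π) r.2 c.2
      else if r.1 = 1 ∧ c.1 = 0 then
        ((1 : Matrix (Fin (3 * q) × Fin N) (Fin (3 * q) × Fin N) ℂ)
            - (Real.exp (-1 / q) : ℂ) • permMatInv q N π) r.2 c.2
      else 0)

/-- `chainPerm q N π j = π_j ∘ ⋯ ∘ π_2 ∘ π_1` (for `0 ≤ j ≤ q`; the chain stops growing
beyond `q`), with `chainPerm q N π 0` the identity permutation. -/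
def chainPerm (q N : ℕ) (π : Fin q → Equiv.Perm (Fin N)) : ℕ → Equiv.Perm (Fin N)
  | 0 => 1
  | (j + 1) => if h : j < q then π ⟨j, h⟩ * chainPerm q N π j else chainPerm q N π j

/-- `xvec q N hN π j = x_j`, defined by `x_j = Π_j(0)` for `0 ≤ j ≤ q`,
`x_j = Π_q(0)` for `q ≤ j ≤ 2q`, and `x_j = Π_{3q−j}(0)` for `2q ≤ j ≤ 3q−1`,
where `Π_j = π_j ∘ ⋯ ∘ π_2 ∘ π_1`. -/
def xvec (q N : ℕ) (hN : 0 < N) (π : Fin q → Equiv.Perm (Fin N)) (j : ℕ) : Fin N :=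
  if j ≤ q then chainPerm q N π j ⟨0, hN⟩
  else if j ≤ 2 * q then chainPerm q N π q ⟨0, hN⟩
  else chainPerm q N π (3 * q - j) ⟨0, hN⟩

/-!
The index map behind `P` is a twisted shift `σ (j, x) = (j + 1, β_j x)` on `Fin (3q) × Fin N`,
and its cocycle `β` is a coboundary: `β_j * Γ_j = Γ_{j+1}` for the cumulative permutations
`Γ_j` (`Π_j`, `Π_q`, `Π_{3q-j}` on the three arms, so `x_j = Γ_j 0`), because the arms apply
`π_{j+1}`, then nothing, then the same `π`'s inverted in reverse order. Hence
`σ^k (j, x) = (j + k, Γ_{j+k} (Γ_j⁻¹ x))`, so `σ^{3q} = 1` and `σ^k (0, 0) = (k, x_k)`.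
With `c = e^{-1/q}` and `c^{3q} = e^{-3} ≠ 1`, the geometric series
`(1 - c^{3q})⁻¹ ∑_{k<3q} c^k P^k` inverts `I - cP` (and likewise for `P⁻¹`), the antidiagonal
block matrix of the two resolvents inverts `A` up to the scalar, and the column of `A⁻¹` at
`(0, 0, 0)` is the resolvent of `P` applied to `e_{(0,0)}`, placed in block `1`.
-/

open scoped Kronecker

section TwistedShift

variable {G X : Type*} [AddGroup G] {g : G} {β γ : G → Equiv.Perm X}

theorem Equiv.prodShear_addRight_pow_apply (hγ : ∀ j, β j * γ j = γ (j + g)) (k : ℕ) (j : G)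
    (x : X) :
    (Equiv.prodShear (Equiv.addRight g) β ^ k) (j, x) =
      (j + k • g, γ (j + k • g) ((γ j)⁻¹ x)) := by
  induction k with
  | zero => simp
  | succ k ih =>
    rw [pow_succ', Equiv.Perm.mul_apply, ih, succ_nsmul, ← add_assoc, ← hγ]
    simp

theorem Equiv.prodShear_addRight_pow_eq_one (hγ : ∀ j, β j * γ j = γ (j + g)) {n : ℕ}
    (hn : n • g = 0) : Equiv.prodShear (Equiv.addRight g) β ^ n = 1 := by
  ext ⟨j, x⟩ <;> simp [Equiv.prodShear_addRight_pow_apply hγ, hn]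

end TwistedShift

theorem Fin.val_nsmul_one (n : ℕ) [NeZero n] (k : ℕ) :
    ((k • (1 : Fin n) : Fin n) : ℕ) = k % n := by
  induction k with
  | zero => simp
  | succ k ih => rw [succ_nsmul, Fin.val_add, ih]; simp

theorem one_sub_smul_mul_geom_sum {K R : Type*} [Field K] [Ring R] [Algebra K R] {M : R} {n : ℕ}
    (hM : M ^ n = 1) {c : K} (hc : c ^ n ≠ 1) :
    (1 - c • M) * ∑ k ∈ Finset.range n, (c ^ k / (1 - c ^ n)) • M ^ k = 1 := by
  have hc' : 1 - c ^ n ≠ 0 := sub_ne_zero.mpr (Ne.symm hc)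
  calc (1 - c • M) * ∑ k ∈ Finset.range n, (c ^ k / (1 - c ^ n)) • M ^ k
      = (1 - c ^ n)⁻¹ • ((1 - c • M) * ∑ k ∈ Finset.range n, (c • M) ^ k) := by
        simp_rw [Finset.mul_sum, Finset.smul_sum, smul_pow, mul_smul_comm, smul_smul,
          div_eq_inv_mul]
    _ = (1 - c ^ n)⁻¹ • (1 - c ^ n) • (1 : R) := by
        rw [mul_neg_geom_sum, smul_pow, hM, sub_smul, one_smul]
    _ = 1 := by rw [smul_smul, inv_mul_cancel₀ hc', one_smul]

namespace Matrix

variable {ι R : Type*} [Fintype ι] [DecidableEq ι] [CommRing R]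

def blockAntidiag (X Y : Matrix ι ι R) : Matrix (Fin 2 × ι) (Fin 2 × ι) R :=
  single 0 1 1 ⊗ₖ X + single 1 0 1 ⊗ₖ Y

theorem blockAntidiag_mul_blockAntidiag (X Y X' Y' : Matrix ι ι R) :
    blockAntidiag X Y * blockAntidiag X' Y' =
      single (0 : Fin 2) 0 1 ⊗ₖ (X * Y') + single (1 : Fin 2) 1 1 ⊗ₖ (Y * X') := by
  simp [blockAntidiag, add_mul, mul_add, ← mul_kronecker_mul, add_comm]

theorem blockAntidiag_mul_blockAntidiag_eq_one {X Y X' Y' : Matrix ι ι R} (h : X * Y' = 1)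
    (h' : Y * X' = 1) : blockAntidiag X Y * blockAntidiag X' Y' = 1 := by
  rw [blockAntidiag_mul_blockAntidiag, h, h', ← add_kronecker,
    ← Fin.sum_univ_two fun i => single i i (1 : R), sum_single_one, one_kronecker_one]

theorem blockAntidiag_mulVec_single_zero (X Y : Matrix ι ι R) (v : ι) :
    blockAntidiag X Y *ᵥ Pi.single (0, v) 1 = ∑ u, Y u v • Pi.single (1, u) 1 := by
  ext ⟨b, u⟩
  rw [mulVec_single_one]
  fin_cases b <;> simp [blockAntidiag, Pi.single_apply, Finset.sum_apply]

theorem permMatrixHom_apply_apply (σ : Equiv.Perm ι) (u v : ι) :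
    (permMatrixHom σ : Matrix ι ι R) u v = if u = σ v then 1 else 0 := by
  simp [PEquiv.toMatrix_apply, Equiv.symm_apply_eq]

variable {K : Type*} [Field K]

theorem inv_smul_blockAntidiag {a : K} (ha : a ≠ 0) {X Y X' Y' : Matrix ι ι K} (h : X * Y' = 1)
    (h' : Y * X' = 1) : (a • blockAntidiag X Y)⁻¹ = a⁻¹ • blockAntidiag X' Y' :=
  inv_eq_right_inv <| by
    rw [Matrix.smul_mul, Matrix.mul_smul, smul_smul, mul_inv_cancel₀ ha, one_smul,
      blockAntidiag_mul_blockAntidiag_eq_one h h']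

theorem inv_smul_blockAntidiag_permMatrixHom_mulVec_single (σ : Equiv.Perm ι) {n : ℕ}
    (hσ : σ ^ n = 1) {c : K} (hc : c ^ n ≠ 1) {a : K} (ha : a ≠ 0) (v : ι) :
    (a • blockAntidiag (1 - c • (permMatrixHom σ : Matrix ι ι K))
        (1 - c • permMatrixHom σ⁻¹))⁻¹ *ᵥ Pi.single (0, v) 1 =
      a⁻¹ • ∑ k ∈ Finset.range n,
        (c ^ k / (1 - c ^ n)) • Pi.single (1, (σ ^ k) v) 1 := by
  have hresolvent : ∀ τ : Equiv.Perm ι, τ ^ n = 1 → (1 - c • (permMatrixHom τ : Matrix ι ι K)) *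
      ∑ k ∈ Finset.range n, (c ^ k / (1 - c ^ n)) • permMatrixHom (τ ^ k) = 1 := by
    intro τ hτ
    simp_rw [map_pow]
    exact one_sub_smul_mul_geom_sum (by rw [← map_pow, hτ, map_one]) hc
  rw [inv_smul_blockAntidiag ha (hresolvent σ hσ) (hresolvent σ⁻¹ (by rw [inv_pow, hσ, inv_one])),
    smul_mulVec, blockAntidiag_mulVec_single_zero]
  congr 1
  simp only [sum_apply, smul_apply, permMatrixHom_apply_apply, Finset.sum_smul, smul_eq_mul,
    mul_ite, mul_one, mul_zero, ite_smul, zero_smul]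
  rw [Finset.sum_comm]
  simp

end Matrix

section Chain

variable {q N : ℕ} (π : Fin q → Equiv.Perm (Fin N))

def branchPerm (j : Fin (3 * q)) : Equiv.Perm (Fin N) :=
  if h : (j : ℕ) < q then π ⟨j, h⟩
  else if h₂ : (j : ℕ) < 2 * q then 1
  else (π ⟨3 * q - 1 - j, by have := j.isLt; omega⟩)⁻¹

def cumPerm (j : ℕ) : Equiv.Perm (Fin N) :=
  if j ≤ q then chainPerm q N π j
  else if j ≤ 2 * q then chainPerm q N π q
  else chainPerm q N π (3 * q - j)

def stepPerm [NeZero q] : Equiv.Perm (Fin (3 * q) × Fin N) :=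
  Equiv.prodShear (Equiv.addRight 1) (branchPerm π)

theorem chainPerm_succ {j : ℕ} (h : j < q) :
    chainPerm q N π (j + 1) = π ⟨j, h⟩ * chainPerm q N π j := by
  simp [chainPerm, h]

theorem cumPerm_of_le {j : ℕ} (h : j ≤ q) : cumPerm π j = chainPerm q N π j := if_pos h

theorem cumPerm_of_le_of_le_two_mul {j : ℕ} (h₁ : q ≤ j) (h₂ : j ≤ 2 * q) :
    cumPerm π j = chainPerm q N π q := by
  unfold cumPerm
  split_ifs with h
  · rw [le_antisymm h h₁]
  · rfl

theorem cumPerm_of_two_mul_le {j : ℕ} (h₁ : 2 * q ≤ j) (h₂ : j ≤ 3 * q) :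
    cumPerm π j = chainPerm q N π (3 * q - j) := by
  unfold cumPerm
  split_ifs
  · congr 1; omega
  · rw [show 3 * q - j = q by omega]
  · rfl

theorem cumPerm_apply_zero (hN : 0 < N) (j : ℕ) :
    cumPerm π j ⟨0, hN⟩ = xvec q N hN π j := by
  unfold cumPerm xvec
  split_ifs <;> rfl

theorem branchPerm_mul_cumPerm_succ (j : Fin (3 * q)) :
    branchPerm π j * cumPerm π j = cumPerm π (j + 1) := by
  unfold branchPerm
  split_ifs with h₁ h₂
  · rw [cumPerm_of_le π h₁.le, cumPerm_of_le π h₁, chainPerm_succ π h₁]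
  · rw [one_mul, cumPerm_of_le_of_le_two_mul π (by omega) h₂.le,
      cumPerm_of_le_of_le_two_mul π (by omega) h₂]
  · have hj := j.isLt
    have hlt : 3 * q - 1 - j < q := by omega
    rw [cumPerm_of_two_mul_le π (by omega) hj.le, cumPerm_of_two_mul_le π (by omega) hj,
      show 3 * q - j = 3 * q - 1 - j + 1 by omega, chainPerm_succ π hlt, inv_mul_cancel_left]
    congr 1
    omega

theorem branchPerm_mul_cumPerm [NeZero q] (j : Fin (3 * q)) :
    branchPerm π j * cumPerm π j = cumPerm π ↑(j + 1) := by
  rw [branchPerm_mul_cumPerm_succ, Fin.val_add, Fin.val_one', Nat.add_mod_mod]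
  rcases (show (j : ℕ) + 1 ≤ 3 * q from j.isLt).lt_or_eq with h | h
  · rw [Nat.mod_eq_of_lt h]
  · rw [h, Nat.mod_self, cumPerm_of_two_mul_le π (by omega) le_rfl,
      cumPerm_of_le π (Nat.zero_le q), Nat.sub_self]

theorem stepFn_eq_stepPerm [NeZero q] : stepFn q N π = stepPerm π := by
  funext ⟨j, x⟩
  have hval : ((j + 1 : Fin (3 * q)) : ℕ) = (j + 1) % (3 * q) := by
    rw [Fin.val_add, Fin.val_one', Nat.add_mod_mod]
  by_cases h₁ : (j : ℕ) < q <;> by_cases h₂ : (j : ℕ) < 2 * q <;>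
    simp [stepFn, stepPerm, branchPerm, h₁, h₂, Prod.ext_iff, Fin.ext_iff, hval]

theorem stepPerm_pow_eq_one [NeZero q] : stepPerm π ^ (3 * q) = 1 :=
  Equiv.prodShear_addRight_pow_eq_one (γ := fun j : Fin (3 * q) => cumPerm π j)
    (branchPerm_mul_cumPerm π) (by ext; rw [Fin.val_nsmul_one, Nat.mod_self, Fin.val_zero])

theorem stepPerm_pow_apply_zero [NeZero q] (hN : 0 < N) {k : ℕ} (hk : k < 3 * q) :
    (stepPerm π ^ k) (⟨0, by omega⟩, ⟨0, hN⟩) = (⟨k, hk⟩, xvec q N hN π k) := by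
  have hk' : ((⟨0, by omega⟩ : Fin (3 * q)) + k • 1 : Fin (3 * q)) = ⟨k, hk⟩ := by
    ext; simp [Fin.val_nsmul_one, Nat.mod_eq_of_lt hk]
  rw [stepPerm, Equiv.prodShear_addRight_pow_apply (γ := fun j : Fin (3 * q) => cumPerm π j)
    (branchPerm_mul_cumPerm π), hk', ← cumPerm_apply_zero π hN]
  simp [cumPerm_of_le π (Nat.zero_le q), chainPerm]

theorem permMat_eq_permMatrixHom [NeZero q] : permMat q N π = permMatrixHom (stepPerm π) := by
  ext r c
  rw [permMatrixHom_apply_apply, permMat, of_apply, stepFn_eq_stepPerm]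

theorem permMatInv_eq_permMatrixHom [NeZero q] :
    permMatInv q N π = permMatrixHom (stepPerm π)⁻¹ := by
  ext r c
  simp only [permMatrixHom_apply_apply, permMatInv, of_apply, stepFn_eq_stepPerm,
    Equiv.Perm.eq_inv_iff_eq]

theorem qlspMat_eq_smul_blockAntidiag [NeZero q] :
    qlspMat q N π = ((1 + Real.exp (-1 / q) : ℝ) : ℂ)⁻¹ •
      blockAntidiag (1 - (Real.exp (-1 / q) : ℂ) • permMatrixHom (stepPerm π))
        (1 - (Real.exp (-1 / q) : ℂ) • permMatrixHom (stepPerm π)⁻¹) := by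
  rw [← permMat_eq_permMatrixHom, ← permMatInv_eq_permMatrixHom]
  ext ⟨b, u⟩ ⟨b', v⟩
  fin_cases b <;> fin_cases b' <;> simp [qlspMat, blockAntidiag]

end Chain

/-- The vector `A⁻¹ e_{(0,0,0)}` equals
`(1+e^{−1/q}) · Σ_{j=0}^{3q−1} (e^{−j/q}/(1−e^{−3})) · e_{(1, j, x_j)}`. -/
theorem qlspMat_inv_mulVec_single (q N : ℕ) (hq : 1 ≤ q) (hN : 1 ≤ N)
    (π : Fin q → Equiv.Perm (Fin N)) :
    (qlspMat q N π)⁻¹.mulVec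
        (Pi.single ((0 : Fin 2), (⟨0, by omega⟩ : Fin (3 * q)),
          (⟨0, by omega⟩ : Fin N)) 1) =
      ((((1 : ℝ) + Real.exp (-1 / q)) : ℝ) : ℂ) •
        ∑ j : Fin (3 * q),
          ((Real.exp (-(j : ℝ) / q) / (1 - Real.exp (-3)) : ℝ) : ℂ) •
            (Pi.single ((1 : Fin 2), j, xvec q N hN π (j : ℕ)) 1 : Fin 2 × Fin (3 * q) × Fin N → ℂ) := by
  have : NeZero q := ⟨by omega⟩
  have hpow : ∀ k : ℕ, Real.exp (-k / q) = Real.exp (-1 / q) ^ k := fun k => by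
    rw [← Real.exp_nat_mul]; congr 1; ring
  have hexp : Real.exp (-1 / q) ^ (3 * q) = Real.exp (-3) := by
    rw [← hpow]; push_cast; field_simp
  have hc : ((Real.exp (-1 / q) : ℝ) : ℂ) ^ (3 * q) ≠ 1 := by
    rw [← Complex.ofReal_pow, hexp]; exact_mod_cast (Real.exp_lt_one_iff.mpr (by norm_num)).ne
  have hscale : ((1 + Real.exp (-1 / q) : ℝ) : ℂ)⁻¹ ≠ 0 :=
    inv_ne_zero (Complex.ofReal_ne_zero.mpr (by positivity))
  rw [qlspMat_eq_smul_blockAntidiag, inv_smul_blockAntidiag_permMatrixHom_mulVec_single _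
    (stepPerm_pow_eq_one π) hc hscale, inv_inv, Finset.sum_range]
  congr 1
  refine Finset.sum_congr rfl fun k _ => ?_
  rw [stepPerm_pow_apply_zero π (by omega) k.isLt, ← Complex.ofReal_pow, ← Complex.ofReal_pow,
    hexp, ← hpow]
  norm_cast
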